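/- arXiv:1709.01941 — 2 statements merged into one kernel-verified Lean document; each statement's English description precedes it below -/
import Mathlib

section
/- Let A ∈ ℂ satisfy A⁸ = −1 and set d = −A² − A^{−2} (so d² = 2). Define the 3×3 complex matrices S = (−A²/2)·[[1, d, −1], [d, 0, d], [−1, d, 1]] and T = diag(A⁵, 1, −A⁵). Then S⁴ = −I and (S·T)³ = −I. -/
set_option maxHeartbeats 1600000 in
/-- Let `A ∈ ℂ` with `A⁸ = −1` and `d = −A² − A⁻²` (so `d² = 2`).  For the 3×3 matrices
`S = (−A²/2)·[[1, d, −1], [d, 0, d], [−1, d, 1]]` and `T = diag(A⁵, 1, −A⁵)` one has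
`S⁴ = −I` and `(S·T)³ = −I`.  (These are the modular matrices of the C₂ theory on the
nonbounding spin torus, where `(−1)^F = −1`.) -/
theorem c2_NN_modular_relations (A : ℂ) (hA : A ^ 8 = -1)
    (d : ℂ) (hd : d = -A ^ 2 - (A ^ 2)⁻¹)
    (S T : Matrix (Fin 3) (Fin 3) ℂ)
    (hS : S = (-A ^ 2 / 2) • !![1, d, -1; d, 0, d; -1, d, 1])
    (hT : T = Matrix.diagonal ![A ^ 5, 1, -A ^ 5]) :
    S ^ 4 = -1 ∧ (S * T) ^ 3 = -1 := by
  have hA0 : A ≠ 0 := by rintro rfl; norm_num at hA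
  have hA2 : A ^ 2 ≠ 0 := pow_ne_zero 2 hA0
  have hd2 : d ^ 2 = 2 := by
    rw [hd]; field_simp; linear_combination hA
  have hA16 : A ^ 16 = 1 := by linear_combination (A ^ 8 - 1) * hA
  clear hd
  have hTe : T = !![A ^ 5, 0, 0; 0, 1, 0; 0, 0, -A ^ 5] := by
    rw [hT]; ext i j; fin_cases i <;> fin_cases j <;>
      simp [Matrix.diagonal, Matrix.vecHead, Matrix.vecTail]
  constructor
  · have h2 : S * S = A ^ 4 • (1 : Matrix (Fin 3) (Fin 3) ℂ) := by
      rw [hS, Matrix.smul_mul, Matrix.mul_smul, smul_smul, Matrix.mul_fin_three]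
      ext i j
      fin_cases i <;> fin_cases j <;> simp [Matrix.one_apply]
      all_goals
        first
          | ring1
          | linear_combination (A ^ 4 / 4) * hd2
          | linear_combination (A ^ 4 / 2) * hd2
          | linear_combination (3 * A ^ 4 / 4) * hd2
          | linear_combination (-A ^ 4 / 4) * hd2
          | exact Or.inr (by linear_combination hd2)
    have h4 : S ^ 4 = (S * S) * (S * S) := by
      rw [show (4 : ℕ) = 2 * 2 from rfl, pow_mul, pow_two, pow_two]
    calc S ^ 4 = (S * S) * (S * S) := h4
      _ = (A ^ 4 * A ^ 4) • (1 : Matrix (Fin 3) (Fin 3) ℂ) := by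
          rw [h2, Matrix.smul_mul, Matrix.mul_smul, smul_smul, one_mul]
      _ = -1 := by
          rw [show A ^ 4 * A ^ 4 = -1 by linear_combination hA]
          simp
  · have hST : S * T = (-A ^ 2 / 2) •
        !![A ^ 5, d, A ^ 5; d * A ^ 5, 0, -(d * A ^ 5); -A ^ 5, d, -A ^ 5] := by
      rw [hS, hTe, Matrix.smul_mul, Matrix.mul_fin_three]
      congr 1
      ext i j
      fin_cases i <;> fin_cases j <;> simp
    rw [hST, smul_pow]
    have hM : !![A ^ 5, d, A ^ 5; d * A ^ 5, 0, -(d * A ^ 5); -A ^ 5, d, -A ^ 5] ^ 3 =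
        (4 * d ^ 2 * A ^ 10) • (1 : Matrix (Fin 3) (Fin 3) ℂ) := by
      rw [pow_succ, pow_two, Matrix.mul_fin_three, Matrix.mul_fin_three]
      ext i j
      fin_cases i <;> fin_cases j <;> simp [Matrix.one_apply] <;> ring
    rw [hM, smul_smul]
    have : (-A ^ 2 / 2) ^ 3 * (4 * d ^ 2 * A ^ 10) = -1 := by
      linear_combination (-A ^ 16 / 2) * hd2 - hA16
    rw [this]; simp
end

section
/- Define the complex 2×2 matrices P = (e^{7πi/12}/√2)·[[1, 1], [i, −i]] and Ṗ = (e^{7πi/12}/√2)·[[i, −i], [−1, −1]]. Then P³ = I and Ṗ³ = −I. -/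
lemma halfE6_c_cube (c : ℂ)
    (hc : c = Complex.exp (7 * Real.pi * Complex.I / 12) / (Real.sqrt 2 : ℂ)) :
    c ^ 3 = (1 - Complex.I) / 4 := by
  have h2 : ((Real.sqrt 2 : ℂ)) ^ 3 = 2 * Real.sqrt 2 := by
    have : ((Real.sqrt 2 : ℂ)) ^ 2 = 2 := by
      norm_cast
      rw [Real.sq_sqrt] <;> norm_num
    rw [pow_succ, this]
  have hexp : Complex.exp (7 * Real.pi * Complex.I / 12) ^ 3
      = (Real.sqrt 2 / 2 : ℝ) * (1 - Complex.I) := by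
    rw [← Complex.exp_nat_mul]
    rw [show ((3:ℕ):ℂ) * (7 * Real.pi * Complex.I / 12) = (7 * Real.pi / 4 : ℝ) * Complex.I
      by push_cast; ring]
    rw [Complex.exp_mul_I, ← Complex.ofReal_cos, ← Complex.ofReal_sin]
    have hcos : Real.cos (7 * Real.pi / 4) = Real.sqrt 2 / 2 := by
      have : (7 : ℝ) * Real.pi / 4 = 2 * Real.pi - Real.pi / 4 := by ring
      rw [this, Real.cos_sub, Real.cos_two_pi, Real.sin_two_pi, Real.cos_pi_div_four]
      ring
    have hsin : Real.sin (7 * Real.pi / 4) = -(Real.sqrt 2 / 2) := by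
      have : (7 : ℝ) * Real.pi / 4 = 2 * Real.pi - Real.pi / 4 := by ring
      rw [this, Real.sin_sub, Real.cos_two_pi, Real.sin_two_pi, Real.sin_pi_div_four]
      ring
    rw [hcos, hsin]
    push_cast
    ring
  have hs : (Real.sqrt 2 : ℂ) ≠ 0 := by
    norm_cast
    positivity
  rw [hc, div_pow, hexp, h2]
  field_simp
  push_cast
  ring

lemma halfE6_M_cube : (!![1, 1; Complex.I, -Complex.I]) ^ 3 = (2 + 2*Complex.I) • 1 := by
  rw [pow_succ, pow_two]
  ext i j
  fin_cases i <;> fin_cases j <;>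
    simp [Matrix.mul_apply, Fin.sum_univ_two, Complex.I_sq] <;> ring_nf <;>
    simp [Complex.I_sq] <;> ring

lemma halfE6_M'_cube : (!![Complex.I, -Complex.I; -1, -1]) ^ 3 = (-2 - 2*Complex.I) • 1 := by
  rw [pow_succ, pow_two]
  ext i j
  fin_cases i <;> fin_cases j <;>
    simp [Matrix.mul_apply, Fin.sum_univ_two, Complex.I_sq] <;> ring_nf <;>
    simp [Complex.I_sq] <;> ring

/-- The pivot matrices `P = (e^{7πi/12}/√2)·[[1, 1], [i, −i]]` and
`Ṗ = (e^{7πi/12}/√2)·[[i, −i], [−1, −1]]` acting on the even resp. odd part of the fusion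
space `V^{ρρ}_ρ` of ½E₆/y satisfy `P³ = I` and `Ṗ³ = −I`. -/
theorem halfE6_pivot_cubes (c : ℂ)
    (hc : c = Complex.exp (7 * Real.pi * Complex.I / 12) / (Real.sqrt 2 : ℂ))
    (P P' : Matrix (Fin 2) (Fin 2) ℂ)
    (hP : P = c • !![1, 1; Complex.I, -Complex.I])
    (hP' : P' = c • !![Complex.I, -Complex.I; -1, -1]) :
    P ^ 3 = 1 ∧ P' ^ 3 = -1 := by
  have hc3 := halfE6_c_cube c hc
  constructor
  · rw [hP, smul_pow, halfE6_M_cube, smul_smul, hc3]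
    rw [show (1 - Complex.I) / 4 * (2 + 2*Complex.I) = 1 by
      have := Complex.I_sq; field_simp; linear_combination (-2 : ℂ) * this]
    simp
  · rw [hP', smul_pow, halfE6_M'_cube, smul_smul, hc3]
    rw [show (1 - Complex.I) / 4 * (-2 - 2*Complex.I) = -1 by
      have := Complex.I_sq; field_simp; linear_combination (2 : ℂ) * this]
    simp
end
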